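/- arXiv:2011.11101 — 2 statements merged into one kernel-verified Lean document; each statement's English description precedes it below -/
import Mathlib

section
/- The linear code over GF(q), q > 2, associated with the minimal cutting blocking set B of PG(3,q) consisting of the 4(q+1) points on three lines of a regulus and one external line, is a [4(q+1), 4]_q code with nonzero weights 3q and 4q, and weight distribution A_{3q} = 4(q²-1), A_{4q} = (q²-3)(q²-1). -/
open scoped LinearAlgebra.Projectivization
open Projectivization Module

/-- A line of the projective space `ℙ K V`. -/
def IsProjLine {K V : Type*} [Field K] [AddCommGroup V] [Module K V]
    (ℓ : Set (ℙ K V)) : Prop :=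
  ∃ W : Submodule K V, Module.finrank K W = 2 ∧ ℓ = {p : ℙ K V | p.submodule ≤ W}

/-- A hyperbolic quadric `Q⁺(3, q)` of `PG(3, q)`: the image of the canonical quadric
`X₁X₄ = X₂X₃` under a projectivity. -/
def IsHyperbolicQuadric {F : Type*} [Field F] (S : Set (ℙ F (Fin 4 → F))) : Prop :=
  ∃ e : (Fin 4 → F) ≃ₗ[F] (Fin 4 → F),
    S = {P : ℙ F (Fin 4 → F) | e P.rep 0 * e P.rep 3 = e P.rep 1 * e P.rep 2}

/-- The weight of the codeword of the linear code associated with a point set `B` of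
`PG(3, q)` corresponding to the nonzero linear functional `f`:
`w = |B| - |{P ∈ B : f(P) = 0}|`. -/
noncomputable def wt {F : Type*} [Field F] (B : Set (ℙ F (Fin 4 → F)))
    (f : (Fin 4 → F) →ₗ[F] F) : ℕ :=
  B.ncard - {P ∈ B | f P.rep = 0}.ncard

/-! The four lines are pairwise skew: the regulus lines lie on `Q`, which `r` misses. Two skew
lines of `PG(3, q)` span the whole space, so a plane `ker f` contains at most one of them, and a
line not contained in a plane meets it in exactly one point. Hence a plane containing one of the
lines meets `B` in `(q + 1) + 3` points and any other plane in `4`, giving the weights `3q` and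
`4q`. The nonzero functionals vanishing on a fixed line are the nonzero vectors of its
`2`-dimensional annihilator, so `4(q² - 1)` of them have weight `3q`, and the remaining
`(q⁴ - 1) - 4(q² - 1) = (q² - 3)(q² - 1)` have weight `4q`. -/

namespace Submodule

variable {K V : Type*} [Field K] [AddCommGroup V] [Module K V]

lemma coe_projectivization (W : Submodule K V) :
    (W.projectivization : Set (ℙ K V)) = {p | p.submodule ≤ W} :=
  Set.ext W.mem_projectivization_iff_submodule_le

lemma coe_projectivization_inf (W W' : Submodule K V) :
    ((W ⊓ W').projectivization : Set (ℙ K V)) =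
      (W.projectivization : Set (ℙ K V)) ∩ W'.projectivization := by
  simp only [coe_projectivization, le_inf_iff, Set.ofPred_and]

lemma coe_projectivization_eq_empty_iff {W : Submodule K V} :
    (W.projectivization : Set (ℙ K V)) = ∅ ↔ W = ⊥ := by
  rw [← Projectivization.Subspace.bot_coe, SetLike.coe_set_eq, map_eq_bot_iff]

lemma disjoint_coe_projectivization_iff {W W' : Submodule K V} :
    Disjoint (W.projectivization : Set (ℙ K V)) W'.projectivization ↔ Disjoint W W' := by
  rw [Set.disjoint_iff_inter_eq_empty, ← coe_projectivization_inf,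
    coe_projectivization_eq_empty_iff, disjoint_iff]

lemma coe_projectivization_ker (f : Module.Dual K V) :
    ((LinearMap.ker f).projectivization : Set (ℙ K V)) = {P | f P.rep = 0} := by
  ext P
  rw [SetLike.mem_coe, mem_projectivization_iff_submodule_le, Projectivization.submodule_eq,
    span_singleton_le_iff_mem, LinearMap.mem_ker, Set.mem_ofPred_eq]

lemma range_map_subtype (W : Submodule K V) :
    Set.range (Projectivization.map W.subtype W.injective_subtype) = W.projectivization := by
  ext P
  induction P using Projectivization.ind with | h v hv =>
  constructor
  · rintro ⟨Q, hQ⟩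
    induction Q using Projectivization.ind with | h w hw =>
    rw [Projectivization.map_mk] at hQ
    rw [← hQ, SetLike.mem_coe, mk_mem_projectivization_iff]
    exact w.2
  · intro h
    rw [SetLike.mem_coe, mk_mem_projectivization_iff] at h
    exact ⟨Projectivization.mk K (⟨v, h⟩ : W) (by simpa using hv), Projectivization.map_mk _ _ _ _⟩

section Finite

variable [Finite K]

lemma ncard_coe_projectivization (W : Submodule K V) :
    (W.projectivization : Set (ℙ K V)).ncard =
      ∑ i ∈ Finset.range (finrank K W), Nat.card K ^ i := by
  rw [← range_map_subtype, Set.ncard_range_of_injective (map_injective _ _),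
    card_of_finrank K W rfl]

lemma ncard_coe_projectivization_of_finrank_eq_one {W : Submodule K V}
    (hW : finrank K W = 1) : (W.projectivization : Set (ℙ K V)).ncard = 1 := by
  simp [ncard_coe_projectivization, hW]

lemma ncard_coe_projectivization_of_finrank_eq_two {W : Submodule K V}
    (hW : finrank K W = 2) : (W.projectivization : Set (ℙ K V)).ncard = Nat.card K + 1 := by
  simp [ncard_coe_projectivization, hW, Finset.sum_range_succ, add_comm]

lemma ncard_coe_projectivization_inter_ker_of_le {W : Submodule K V} (hW : finrank K W = 2)
    {f : Module.Dual K V} (h : W ≤ LinearMap.ker f) :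
    ((W.projectivization : Set (ℙ K V)) ∩ {P | f P.rep = 0}).ncard = Nat.card K + 1 := by
  rw [← coe_projectivization_ker, ← coe_projectivization_inf, inf_eq_left.2 h,
    ncard_coe_projectivization_of_finrank_eq_two hW]

end Finite

variable [FiniteDimensional K V]

lemma finrank_inf_ker_add_one {W : Submodule K V} {f : Module.Dual K V}
    (hW : ¬ W ≤ LinearMap.ker f) : finrank K ↥(W ⊓ LinearMap.ker f) + 1 = finrank K W := by
  have hf : f ≠ 0 := by
    rintro rfl
    exact hW (by simp)
  have hker := f.finrank_ker_add_one_of_ne_zero hf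
  have hlt : finrank K (LinearMap.ker f) < finrank K ↥(W ⊔ LinearMap.ker f) :=
    finrank_lt_finrank_of_lt (lt_of_le_of_ne le_sup_right fun h => hW (h ▸ le_sup_left))
  have hle := (W ⊔ LinearMap.ker f).finrank_le
  have hsum := finrank_sup_add_finrank_inf_eq W (LinearMap.ker f)
  omega

lemma sup_eq_top_of_disjoint {W W' : Submodule K V} (h : Disjoint W W')
    (hdim : finrank K V ≤ finrank K W + finrank K W') : W ⊔ W' = ⊤ := by
  apply eq_top_of_finrank_eq
  have hsum := finrank_sup_add_finrank_inf_eq W W'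
  rw [h.eq_bot, finrank_bot] at hsum
  have := (W ⊔ W').finrank_le
  omega

lemma not_le_ker_of_disjoint {W W' : Submodule K V} (h : Disjoint W W')
    (hdim : finrank K V ≤ finrank K W + finrank K W') {f : Module.Dual K V} (hf : f ≠ 0)
    (hW : W ≤ LinearMap.ker f) : ¬ W' ≤ LinearMap.ker f := fun hW' =>
  hf <| LinearMap.ker_eq_top.1 <| top_le_iff.1 <| sup_eq_top_of_disjoint h hdim ▸ sup_le hW hW'

lemma ncard_setOf_ne_zero_le_ker (W : Submodule K V) :
    {f : Module.Dual K V | f ≠ 0 ∧ W ≤ LinearMap.ker f}.ncard =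
      Nat.card K ^ (finrank K V - finrank K W) - 1 := by
  have hset : {f : Module.Dual K V | f ≠ 0 ∧ W ≤ LinearMap.ker f} =
      (W.dualAnnihilator : Set (Module.Dual K V)) \ {0} := by
    ext f
    simp only [Set.mem_sdiff, SetLike.mem_coe, mem_dualAnnihilator, Set.mem_singleton_iff,
      SetLike.le_def, LinearMap.mem_ker, Set.mem_ofPred_eq]
    tauto
  have hdim := Subspace.finrank_add_finrank_dualAnnihilator_eq W
  rw [hset, Set.ncard_sdiff_singleton_of_mem W.dualAnnihilator.zero_mem, ← Nat.card_coe_set_eq,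
    SetLike.coe_sort_coe, natCard_eq_pow_finrank (K := K), ← hdim, Nat.add_sub_cancel_left]

lemma ncard_setOf_dual_ne_zero :
    {f : Module.Dual K V | f ≠ 0}.ncard = Nat.card K ^ finrank K V - 1 := by
  simpa using ncard_setOf_ne_zero_le_ker (⊥ : Submodule K V)

lemma ncard_coe_projectivization_inter_ker_of_not_le [Finite K] {W : Submodule K V}
    (hW : finrank K W = 2) {f : Module.Dual K V} (h : ¬ W ≤ LinearMap.ker f) :
    ((W.projectivization : Set (ℙ K V)) ∩ {P | f P.rep = 0}).ncard = 1 := by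
  rw [← coe_projectivization_ker, ← coe_projectivization_inf]
  exact ncard_coe_projectivization_of_finrank_eq_one (by have := finrank_inf_ker_add_one h; omega)

end Submodule

section SkewLines

open Submodule Function

variable {K V ι : Type*} [Field K] [AddCommGroup V] [Module K V] [FiniteDimensional K V]
  {L : ι → Submodule K V}

lemma eq_of_le_ker_of_pairwise_disjoint (hV : finrank K V = 4) (hL : ∀ i, finrank K (L i) = 2)
    (hskew : Pairwise (Disjoint on L)) {f : Module.Dual K V} (hf : f ≠ 0) {i j : ι}
    (hi : L i ≤ LinearMap.ker f) (hj : L j ≤ LinearMap.ker f) : i = j := by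
  by_contra hij
  exact not_le_ker_of_disjoint (hskew hij) (by rw [hL, hL, hV]) hf hi hj

lemma span_iUnion_projectivization_eq_top (hV : finrank K V = 4)
    (hL : ∀ i, finrank K (L i) = 2) (hskew : Pairwise (Disjoint on L)) {i j : ι} (hij : i ≠ j) :
    Projectivization.Subspace.span (⋃ k, ((L k).projectivization : Set (ℙ K V))) = ⊤ := by
  have hsub : ((L i).projectivization : Set (ℙ K V)) ∪ (L j).projectivization ⊆
      ⋃ k, ((L k).projectivization : Set (ℙ K V)) :=
    Set.union_subset (Set.subset_iUnion_of_subset i le_rfl) (Set.subset_iUnion_of_subset j le_rfl)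
  refine top_le_iff.1 (le_trans ?_ (Projectivization.Subspace.span_le_span hsub))
  rw [Projectivization.Subspace.span_union, Projectivization.Subspace.span_coe,
    Projectivization.Subspace.span_coe, ← OrderIso.map_sup,
    sup_eq_top_of_disjoint (hskew hij) (by rw [hL, hL, hV]), OrderIso.map_top]

variable [Finite K] [Fintype ι]

lemma ncard_iUnion_projectivization (hL : ∀ i, finrank K (L i) = 2)
    (hskew : Pairwise (Disjoint on L)) :
    (⋃ i, ((L i).projectivization : Set (ℙ K V))).ncard = Fintype.card ι * (Nat.card K + 1) := by
  have := Module.finite_of_finite K (M := V)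
  rw [Set.ncard_iUnion_of_finite (fun _ => Set.toFinite _)
      (fun i j hij => disjoint_coe_projectivization_iff.2 (hskew hij)),
    finsum_eq_sum_of_fintype]
  simp [ncard_coe_projectivization_of_finrank_eq_two (hL _)]

lemma ncard_iUnion_projectivization_inter_ker (hskew : Pairwise (Disjoint on L))
    (f : Module.Dual K V) :
    ((⋃ i, ((L i).projectivization : Set (ℙ K V))) ∩ {P | f P.rep = 0}).ncard =
      ∑ i, (((L i).projectivization : Set (ℙ K V)) ∩ {P | f P.rep = 0}).ncard := by
  have := Module.finite_of_finite K (M := V)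
  rw [Set.iUnion_inter, Set.ncard_iUnion_of_finite (fun _ => Set.toFinite _)
      (fun i j hij => (disjoint_coe_projectivization_iff.2 (hskew hij)).mono
        Set.inter_subset_left Set.inter_subset_left),
    finsum_eq_sum_of_fintype]

end SkewLines

section WeightDistribution

open Submodule Function

variable {F ι : Type*} [Field F] [Finite F] [Fintype ι] {L : ι → Submodule F (Fin 4 → F)}
  {B : Set (ℙ F (Fin 4 → F))}

lemma wt_eq_sub_sum (hL : ∀ i, finrank F (L i) = 2) (hskew : Pairwise (Disjoint on L))
    (hB : B = ⋃ i, ((L i).projectivization : Set _)) (f : Module.Dual F (Fin 4 → F)) :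
    wt B f = Fintype.card ι * (Nat.card F + 1) -
      ∑ i, (((L i).projectivization : Set (ℙ F (Fin 4 → F))) ∩ {P | f P.rep = 0}).ncard := by
  have hsep : {P ∈ B | f P.rep = 0} = B ∩ {P | f P.rep = 0} := rfl
  rw [wt, hsep, hB, ncard_iUnion_projectivization hL hskew,
    ncard_iUnion_projectivization_inter_ker hskew]

lemma wt_eq_of_le_ker (hL : ∀ i, finrank F (L i) = 2) (hskew : Pairwise (Disjoint on L))
    (hB : B = ⋃ i, ((L i).projectivization : Set _)) {f : Module.Dual F (Fin 4 → F)}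
    (hf : f ≠ 0) {i : ι} (hi : L i ≤ LinearMap.ker f) :
    wt B f = (Fintype.card ι - 1) * Nat.card F := by
  classical
  have hj : ∀ j ∈ Finset.univ.erase i, ¬ L j ≤ LinearMap.ker f := fun j hj hj' =>
    Finset.ne_of_mem_erase hj
      (eq_of_le_ker_of_pairwise_disjoint (finrank_fin_fun F) hL hskew hf hj' hi)
  rw [wt_eq_sub_sum hL hskew hB, ← Finset.add_sum_erase _ _ (Finset.mem_univ i),
    ncard_coe_projectivization_inter_ker_of_le (hL i) hi,
    Finset.sum_congr rfl fun j hj' =>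
      ncard_coe_projectivization_inter_ker_of_not_le (hL j) (hj j hj'),
    Finset.sum_const, Finset.card_erase_of_mem (Finset.mem_univ i), Finset.card_univ,
    smul_eq_mul, mul_one]
  obtain ⟨m, hm⟩ : ∃ m, Fintype.card ι = m + 1 :=
    Nat.exists_eq_succ_of_ne_zero (Fintype.card_pos_iff.2 ⟨i⟩).ne'
  rw [hm, Nat.add_sub_cancel]
  exact Nat.sub_eq_of_eq_add (by ring)

lemma wt_eq_of_forall_not_le_ker (hL : ∀ i, finrank F (L i) = 2)
    (hskew : Pairwise (Disjoint on L)) (hB : B = ⋃ i, ((L i).projectivization : Set _))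
    {f : Module.Dual F (Fin 4 → F)} (h : ∀ i, ¬ L i ≤ LinearMap.ker f) :
    wt B f = Fintype.card ι * Nat.card F := by
  simp_rw [wt_eq_sub_sum hL hskew hB, ncard_coe_projectivization_inter_ker_of_not_le (hL _) (h _),
    Finset.sum_const, Finset.card_univ, smul_eq_mul, mul_one]
  exact Nat.sub_eq_of_eq_add (by ring)

lemma wt_eq_or (hL : ∀ i, finrank F (L i) = 2) (hskew : Pairwise (Disjoint on L))
    (hB : B = ⋃ i, ((L i).projectivization : Set _)) {f : Module.Dual F (Fin 4 → F)}
    (hf : f ≠ 0) :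
    wt B f = (Fintype.card ι - 1) * Nat.card F ∨ wt B f = Fintype.card ι * Nat.card F := by
  by_cases h : ∃ i, L i ≤ LinearMap.ker f
  · obtain ⟨i, hi⟩ := h
    exact Or.inl (wt_eq_of_le_ker hL hskew hB hf hi)
  · exact Or.inr (wt_eq_of_forall_not_le_ker hL hskew hB (not_exists.1 h))

variable [Nonempty ι]

lemma sub_one_mul_card_ne_mul_card :
    (Fintype.card ι - 1) * Nat.card F ≠ Fintype.card ι * Nat.card F := by
  have := Fintype.card_pos (α := ι)
  have := Finite.one_lt_card (α := F)
  intro h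
  have := Nat.eq_of_mul_eq_mul_right (by omega) h
  omega

lemma setOf_wt_eq_sub_one_mul (hL : ∀ i, finrank F (L i) = 2)
    (hskew : Pairwise (Disjoint on L)) (hB : B = ⋃ i, ((L i).projectivization : Set _)) :
    {f : Module.Dual F (Fin 4 → F) | f ≠ 0 ∧ wt B f = (Fintype.card ι - 1) * Nat.card F} =
      ⋃ i, {f | f ≠ 0 ∧ L i ≤ LinearMap.ker f} := by
  ext f
  simp only [Set.mem_ofPred_eq, Set.mem_iUnion, exists_and_left]
  refine and_congr_right fun hf => ⟨fun hwt => ?_, fun ⟨i, hi⟩ => wt_eq_of_le_ker hL hskew hB hf hi⟩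
  by_contra! h
  exact sub_one_mul_card_ne_mul_card (hwt.symm.trans (wt_eq_of_forall_not_le_ker hL hskew hB h))

lemma ncard_setOf_wt_eq_sub_one_mul (hL : ∀ i, finrank F (L i) = 2)
    (hskew : Pairwise (Disjoint on L)) (hB : B = ⋃ i, ((L i).projectivization : Set _)) :
    {f : Module.Dual F (Fin 4 → F) | f ≠ 0 ∧ wt B f = (Fintype.card ι - 1) * Nat.card F}.ncard =
      Fintype.card ι * (Nat.card F ^ 2 - 1) := by
  have : Finite (Module.Dual F (Fin 4 → F)) := Module.finite_of_finite F
  rw [setOf_wt_eq_sub_one_mul hL hskew hB, Set.ncard_iUnion_of_finite (fun _ => Set.toFinite _)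
    fun i j hij => Set.disjoint_left.2 fun f hi hj =>
      hij (eq_of_le_ker_of_pairwise_disjoint (finrank_fin_fun F) hL hskew hi.1 hi.2 hj.2),
    finsum_eq_sum_of_fintype]
  simp [ncard_setOf_ne_zero_le_ker, hL]

lemma ncard_setOf_wt_eq_mul (hL : ∀ i, finrank F (L i) = 2)
    (hskew : Pairwise (Disjoint on L)) (hB : B = ⋃ i, ((L i).projectivization : Set _)) :
    {f : Module.Dual F (Fin 4 → F) | f ≠ 0 ∧ wt B f = Fintype.card ι * Nat.card F}.ncard =
      (Nat.card F ^ 4 - 1) - Fintype.card ι * (Nat.card F ^ 2 - 1) := by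
  have : Finite (Module.Dual F (Fin 4 → F)) := Module.finite_of_finite F
  have hset : {f : Module.Dual F (Fin 4 → F) | f ≠ 0 ∧ wt B f = Fintype.card ι * Nat.card F} =
      {f | f ≠ 0} \ {f | f ≠ 0 ∧ wt B f = (Fintype.card ι - 1) * Nat.card F} := by
    ext f
    simp only [Set.mem_ofPred_eq, Set.mem_sdiff, not_and]
    refine and_congr_right fun hf =>
      ⟨fun hwt _ h => sub_one_mul_card_ne_mul_card (h.symm.trans hwt),
        fun h => (wt_eq_or hL hskew hB hf).resolve_left (h hf)⟩
  rw [hset, Set.ncard_sdiff (fun f hf => hf.1), ncard_setOf_dual_ne_zero, finrank_fin_fun,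
    ncard_setOf_wt_eq_sub_one_mul hL hskew hB]

end WeightDistribution

lemma sq_sub_one_sub_four_mul_sub_one (s : ℕ) : s ^ 2 - 1 - 4 * (s - 1) = (s - 3) * (s - 1) := by
  rcases Nat.lt_or_ge s 3 with hs | hs
  · interval_cases s <;> rfl
  · obtain ⟨t, rfl⟩ := Nat.exists_eq_add_of_le' hs
    rw [Nat.add_sub_cancel, show t + 3 - 1 = t + 2 by omega, Nat.sub_sub]
    exact Nat.sub_eq_of_eq_add (by ring)

open Submodule Function in
theorem statement12_general (q : ℕ) (F : Type*) [Field F] [Fintype F]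
    (hq : Fintype.card F = q)
    (Q ℓ₁ ℓ₂ ℓ₃ r : Set (ℙ F (Fin 4 → F)))
    (hl₁ : IsProjLine ℓ₁) (hl₂ : IsProjLine ℓ₂) (hl₃ : IsProjLine ℓ₃)
    (hl₁Q : ℓ₁ ⊆ Q) (hl₂Q : ℓ₂ ⊆ Q) (hl₃Q : ℓ₃ ⊆ Q)
    (h₁₂ : ℓ₁ ∩ ℓ₂ = ∅) (h₁₃ : ℓ₁ ∩ ℓ₃ = ∅) (h₂₃ : ℓ₂ ∩ ℓ₃ = ∅)
    (hr : IsProjLine r) (hrQ : r ∩ Q = ∅)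
    (B : Set (ℙ F (Fin 4 → F))) (hB : B = ℓ₁ ∪ ℓ₂ ∪ ℓ₃ ∪ r) :
    B.ncard = 4 * (q + 1) ∧
    Projectivization.Subspace.span B = ⊤ ∧
    (∀ f : (Fin 4 → F) →ₗ[F] F, f ≠ 0 → wt B f = 3 * q ∨ wt B f = 4 * q) ∧
    {f : (Fin 4 → F) →ₗ[F] F | f ≠ 0 ∧ wt B f = 3 * q}.ncard = 4 * (q ^ 2 - 1) ∧
    {f : (Fin 4 → F) →ₗ[F] F | f ≠ 0 ∧ wt B f = 4 * q}.ncard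
      = (q ^ 2 - 3) * (q ^ 2 - 1) := by
  subst hq
  have hr₁ := Set.disjoint_of_subset_right hl₁Q (Set.disjoint_iff_inter_eq_empty.2 hrQ)
  have hr₂ := Set.disjoint_of_subset_right hl₂Q (Set.disjoint_iff_inter_eq_empty.2 hrQ)
  have hr₃ := Set.disjoint_of_subset_right hl₃Q (Set.disjoint_iff_inter_eq_empty.2 hrQ)
  rw [← Set.disjoint_iff_inter_eq_empty] at h₁₂ h₁₃ h₂₃
  obtain ⟨W₁, hW₁, rfl⟩ := hl₁
  obtain ⟨W₂, hW₂, rfl⟩ := hl₂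
  obtain ⟨W₃, hW₃, rfl⟩ := hl₃
  obtain ⟨W₄, hW₄, rfl⟩ := hr
  simp only [← coe_projectivization, disjoint_coe_projectivization_iff]
    at h₁₂ h₁₃ h₂₃ hr₁ hr₂ hr₃ hB
  set L : Fin 4 → Submodule F (Fin 4 → F) := ![W₁, W₂, W₃, W₄]
  have hL : ∀ i, finrank F (L i) = 2 := by
    intro i
    fin_cases i <;> assumption
  have hskew : Pairwise (Disjoint on L) := by
    intro i j hij
    fin_cases i <;> fin_cases j <;> simp_all [onFun, L, disjoint_comm]
  have hBL : B = ⋃ i, ((L i).projectivization : Set _) := by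
    ext P
    simp [hB, Fin.exists_fin_succ, L, or_assoc]
  have hcard : Nat.card F = Fintype.card F := Nat.card_eq_fintype_card
  have h4 : Fintype.card (Fin 4) = 4 := Fintype.card_fin 4
  refine ⟨?_, ?_, fun f hf => ?_, ?_, ?_⟩
  · rw [hBL, ncard_iUnion_projectivization hL hskew, h4, hcard]
  · rw [hBL]
    exact span_iUnion_projectivization_eq_top (finrank_fin_fun F) hL hskew
      (i := 0) (j := 1) (by decide)
  · simpa [h4, hcard] using wt_eq_or hL hskew hBL hf
  · simpa [h4, hcard] using ncard_setOf_wt_eq_sub_one_mul hL hskew hBL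
  · have := ncard_setOf_wt_eq_mul hL hskew hBL
    rw [h4, hcard] at this
    rw [this, show Fintype.card F ^ 4 = (Fintype.card F ^ 2) ^ 2 by ring,
      sq_sub_one_sub_four_mul_sub_one]

/-- The linear code over `GF(q)`, `q > 2`, associated with the minimal cutting blocking set
`B` of `PG(3, q)` consisting of the `4(q+1)` points on three pairwise skew lines of a
regulus of a hyperbolic quadric and one external line, is a `[4(q+1), 4]_q` code
(length `4(q+1)`, the points of `B` span `PG(3,q)`) with nonzero weights `3q` and `4q`
and weight distribution `A_{3q} = 4(q²-1)`, `A_{4q} = (q²-3)(q²-1)`. -/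
theorem statement12 (q : ℕ) (F : Type*) [Field F] [Fintype F]
    (hq : Fintype.card F = q) (hq2 : 2 < q)
    (Q ℓ₁ ℓ₂ ℓ₃ r : Set (ℙ F (Fin 4 → F)))
    (hQ : IsHyperbolicQuadric Q)
    (hl₁ : IsProjLine ℓ₁) (hl₂ : IsProjLine ℓ₂) (hl₃ : IsProjLine ℓ₃)
    (hl₁Q : ℓ₁ ⊆ Q) (hl₂Q : ℓ₂ ⊆ Q) (hl₃Q : ℓ₃ ⊆ Q)
    (h₁₂ : ℓ₁ ∩ ℓ₂ = ∅) (h₁₃ : ℓ₁ ∩ ℓ₃ = ∅) (h₂₃ : ℓ₂ ∩ ℓ₃ = ∅)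
    (hr : IsProjLine r) (hrQ : r ∩ Q = ∅)
    (B : Set (ℙ F (Fin 4 → F))) (hB : B = ℓ₁ ∪ ℓ₂ ∪ ℓ₃ ∪ r) :
    B.ncard = 4 * (q + 1) ∧
    Projectivization.Subspace.span B = ⊤ ∧
    (∀ f : (Fin 4 → F) →ₗ[F] F, f ≠ 0 → wt B f = 3 * q ∨ wt B f = 4 * q) ∧
    {f : (Fin 4 → F) →ₗ[F] F | f ≠ 0 ∧ wt B f = 3 * q}.ncard = 4 * (q ^ 2 - 1) ∧
    {f : (Fin 4 → F) →ₗ[F] F | f ≠ 0 ∧ wt B f = 4 * q}.ncard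
      = (q ^ 2 - 3) * (q ^ 2 - 1) :=
  statement12_general q F hq Q ℓ₁ ℓ₂ ℓ₃ r hl₁ hl₂ hl₃ hl₁Q hl₂Q hl₃Q h₁₂ h₁₃ h₂₃ hr hrQ B hB
end

section
/- Let φ: PG(2,q²) → subsets of PG(5,q) be the field reduction map sending each point (1-dimensional GF(q²)-subspace of GF(q²)³) to the corresponding line of PG(5,q) (2-dimensional GF(q)-subspace of GF(q)⁶ = GF(q²)³). If P is a set of points of PG(2,q²) that is not contained in any line of PG(2,q²) and not contained in any degenerate Hermitian curve of rank 2 of PG(2,q²), then the lines {φ(P) : P ∈ P} are in higgledy-piggledy arrangement in PG(5,q), i.e., their union of points is a cutting blocking set of PG(5,q). -/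
open scoped LinearAlgebra.Projectivization
open Projectivization Module

/-- A hyperplane of the projective space `ℙ K V`. -/
def IsProjHyperplane {K V : Type*} [Field K] [AddCommGroup V] [Module K V]
    (H : Set (ℙ K V)) : Prop :=
  ∃ f : V →ₗ[K] K, f ≠ 0 ∧ H = {p : ℙ K V | f p.rep = 0}

/-- A cutting blocking set: for every hyperplane `H`, the set `H ∩ X` spans `H`. -/
def IsCuttingBlockingSet {K V : Type*} [Field K] [AddCommGroup V] [Module K V]
    (X : Set (ℙ K V)) : Prop :=
  ∀ H : Set (ℙ K V), IsProjHyperplane H →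
    Projectivization.Subspace.span (H ∩ X) = Projectivization.Subspace.span H

/-- The field reduction map: a point of `PG(2, q²) = ℙ L V` is sent to the set of points of
`PG(5, q) = ℙ K V` lying on the corresponding spread line (the `K`-restriction of its
`L`-span). -/
def fieldReduction {K L V : Type*} [Field K] [Field L] [Algebra K L]
    [AddCommGroup V] [Module K V] [Module L V] [IsScalarTower K L V]
    (P : ℙ L V) : Set (ℙ K V) :=
  {Q : ℙ K V | Q.submodule ≤ Submodule.restrictScalars K P.submodule}

/-- A degenerate Hermitian curve of rank 2 of `PG(2, q²)`: the cone with vertex a point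
`P₀` over a Baer subline (the `K`-combinations of two `L`-independent vectors spanning a
line not through `P₀`). -/
def IsDegHermitian (K : Type*) {L V : Type*} [Field K] [Field L] [Algebra K L]
    [AddCommGroup V] [Module L V] (H : Set (ℙ L V)) : Prop :=
  ∃ (P₀ : ℙ L V) (u w : V), LinearIndependent L ![u, w] ∧
    P₀.submodule ⊓ Submodule.span L {u, w} = ⊥ ∧
    H = {P : ℙ L V | ∃ a b : K, ¬(a = 0 ∧ b = 0) ∧
      P.submodule ≤ P₀.submodule ⊔
        Submodule.span L {algebraMap K L a • u + algebraMap K L b • w}}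

/-!
Composition with a nonzero `K`-linear form `t : L → K` identifies the `L`-dual of `V` with its
`K`-dual, so two hyperplanes of `PG(5, q)` are `ker (t ∘ ℓ₁)` and `ker (t ∘ ℓ₂)`. If the points of
`X = ⋃ φ(P)` on `ker (t ∘ ℓ₁)` did not span it, they would lie in a solid
`ker (t ∘ ℓ₁) ∩ ker (t ∘ ℓ₂)`, and since every spread line meets every hyperplane, every point of
`S` would meet that solid in some `v`. If `ℓ₂ = μ ℓ₁` with `μ ∉ K`, then `t` vanishes on the
`K`-span of `ℓ₁ v` and `μ ℓ₁ v`, which is all of `L ℓ₁ v`, so `ℓ₁ v = 0` and `S` lies on the line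
`ker ℓ₁`.
Otherwise take `u, w` dual to `ℓ₁, ℓ₂`: the values `ℓ₁ v, ℓ₂ v` lie on the `K`-line `ker t = K τ`,
so modulo the vertex `ker ℓ₁ ∩ ker ℓ₂` the vector `v` is `τ` times a `K`-combination of `u, w`,
and `S` lies on a degenerate Hermitian curve.
-/

theorem Submodule.mem_projectivization_iff_rep_mem {K V : Type*} [Field K] [AddCommGroup V]
    [Module K V] (M : Submodule K V) (p : ℙ K V) : p ∈ M.projectivization ↔ p.rep ∈ M := by
  rw [M.mem_projectivization_iff_submodule_le, p.submodule_eq,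
    Submodule.span_singleton_le_iff_mem]

namespace Projectivization

variable {K V : Type*} [Field K] [AddCommGroup V] [Module K V]

theorem Subspace.submodule_span (T : Set (ℙ K V)) :
    Subspace.submodule (Subspace.span T) = Submodule.span K (Projectivization.rep '' T) := by
  refine eq_of_forall_ge_iff fun M => ?_
  rw [← OrderIso.le_symm_apply, Subspace.span_le_subspace_iff, Submodule.span_le,
    Set.image_subset_iff]
  exact forall₂_congr fun p _ => M.mem_projectivization_iff_rep_mem p

theorem rep_mk_mem_iff {M : Submodule K V} {v : V} (hv : v ≠ 0) :
    (mk K v hv).rep ∈ M ↔ v ∈ M := by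
  obtain ⟨a, ha⟩ := exists_smul_eq_mk_rep K v hv
  rw [← ha, M.smul_mem_iff' a]

end Projectivization

open Projectivization

theorem isCuttingBlockingSet_of_forall_ker_le {K V : Type*} [Field K] [AddCommGroup V]
    [Module K V] {X : Set (ℙ K V)}
    (h : ∀ f g : Dual K V, f ≠ 0 → (∀ p ∈ X, f p.rep = 0 → g p.rep = 0) →
      LinearMap.ker f ≤ LinearMap.ker g) :
    IsCuttingBlockingSet X := by
  rintro _ ⟨f, hf, rfl⟩
  have hH : {p : ℙ K V | f p.rep = 0} = (LinearMap.ker f).projectivization :=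
    Set.ext fun p => by exact ((LinearMap.ker f).mem_projectivization_iff_rep_mem p).symm
  apply Subspace.submodule.injective
  rw [Subspace.submodule_span, hH, Subspace.span_coe, OrderIso.apply_symm_apply]
  refine le_antisymm (Submodule.span_le.2 ?_) fun x hx => ?_
  · rintro _ ⟨p, ⟨hp, -⟩, rfl⟩
    exact ((LinearMap.ker f).mem_projectivization_iff_rep_mem p).1 hp
  by_contra hxM
  obtain ⟨g, hgx, hgM⟩ := Submodule.exists_dual_map_eq_bot_of_notMem hxM inferInstance
  rw [← LinearMap.le_ker_iff_map, Submodule.span_le] at hgM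
  refine hgx (h f g hf (fun p hpX hpf => hgM ⟨p, ⟨?_, hpX⟩, rfl⟩) hx)
  exact ((LinearMap.ker f).mem_projectivization_iff_rep_mem p).2 hpf

section FieldReduction

variable {K L V : Type*} [Field K] [Field L] [Algebra K L] [AddCommGroup V] [Module K V]
  [Module L V] [IsScalarTower K L V]

variable (L) in
/-- The set `φ⁻¹(Π)` of the paper, for `Π = T`. -/
def fieldReductionPreimage (T : Set (ℙ K V)) : Set (ℙ L V) :=
  {P | (fieldReduction P ∩ T).Nonempty}

theorem mem_fieldReduction_iff {P : ℙ L V} {Q : ℙ K V} :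
    Q ∈ fieldReduction P ↔ Q.rep ∈ P.submodule := by
  rw [fieldReduction, Set.mem_ofPred_eq, Q.submodule_eq, Submodule.span_singleton_le_iff_mem,
    Submodule.restrictScalars_mem]

theorem exists_mem_fieldReduction_apply_eq_zero (hKL : finrank K L = 2) (f : Dual K V)
    (P : ℙ L V) : ∃ Q ∈ fieldReduction (K := K) P, f Q.rep = 0 := by
  have := Module.finite_of_finrank_eq_succ hKL
  let φ : L →ₗ[K] K := f ∘ₗ (LinearMap.toSpanSingleton L V P.rep).restrictScalars K
  obtain ⟨c, hc, hc0⟩ := Submodule.exists_mem_ne_zero_of_ne_bot <|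
    φ.ker_ne_bot_of_finrank_lt (by rw [hKL, finrank_self]; norm_num)
  have hv : c • P.rep ≠ 0 := smul_ne_zero hc0 P.rep_nonzero
  refine ⟨mk K _ hv, mem_fieldReduction_iff.2 ?_, ?_⟩
  · refine (rep_mk_mem_iff (M := P.submodule.restrictScalars K) hv).2 ?_
    rw [Submodule.restrictScalars_mem, P.submodule_eq]
    exact Submodule.mem_span_singleton.2 ⟨c, rfl⟩
  · exact rep_mk_mem_iff (M := LinearMap.ker f) hv |>.2 hc

theorem exists_dual_comp_eq [FiniteDimensional K L] [FiniteDimensional L V] {t : Dual K L}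
    (ht : t ≠ 0) (f : Dual K V) : ∃ ℓ : Dual L V, t ∘ₗ ℓ.restrictScalars K = f := by
  let Φ : Dual L V →ₗ[K] Dual K V :=
    LinearMap.llcomp K V L K t ∘ₗ LinearMap.restrictScalarsₗ K L V L K
  have hΦ : Function.Injective Φ := by
    refine (injective_iff_map_eq_zero Φ).2 fun ℓ hℓ => ?_
    by_contra hℓ0
    obtain ⟨v, hv⟩ : ∃ v, ℓ v ≠ 0 := by
      by_contra! h; exact hℓ0 (LinearMap.ext h)
    refine ht (LinearMap.ext fun y => ?_)
    have := LinearMap.congr_fun hℓ ((y * (ℓ v)⁻¹) • v)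
    simpa [Φ, inv_mul_cancel_right₀ hv] using this
  have : FiniteDimensional K V := .trans K L V
  refine (LinearMap.injective_iff_surjective_of_finrank_eq_finrank ?_).1 hΦ f
  rw [← Module.finrank_mul_finrank K L, Subspace.dual_finrank_eq, Subspace.dual_finrank_eq,
    Module.finrank_mul_finrank]

theorem exists_eq_span_rep_of_mem_fieldReductionPreimage {T : Set (ℙ K V)} {P : ℙ L V}
    (hP : P ∈ fieldReductionPreimage L T) : ∃ Q ∈ T, P.submodule = L ∙ Q.rep := by
  obtain ⟨Q, hQP, hQT⟩ := hP
  exact ⟨Q, hQT, eq_span_singleton_of_mem_of_finrank_eq_one P.finrank_submodule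
    (mem_fieldReduction_iff.1 hQP) Q.rep_nonzero⟩

theorem eq_zero_of_apply_eq_zero_of_apply_mul_eq_zero (hKL : finrank K L = 2) {t : Dual K L}
    (ht : t ≠ 0) {μ : L} (hμ : μ ∉ Set.range (algebraMap K L)) {x : L} (h₁ : t x = 0)
    (h₂ : t (μ * x) = 0) : x = 0 := by
  have := Module.finite_of_finrank_eq_succ hKL
  by_contra hx
  let φ : Dual K L := t ∘ₗ LinearMap.mulRight K x
  have hφ : φ ≠ 0 := fun h => ht <| LinearMap.ext fun y => by
    simpa [φ, inv_mul_cancel_right₀ hx] using LinearMap.congr_fun h (y * x⁻¹)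
  have hker : LinearMap.ker φ = K ∙ 1 := by
    refine eq_span_singleton_of_mem_of_finrank_eq_one ?_ (by simpa [φ] using h₁) one_ne_zero
    have := φ.finrank_ker_add_one_of_ne_zero hφ
    omega
  have hμker : μ ∈ LinearMap.ker φ := by simpa [φ] using h₂
  obtain ⟨a, ha⟩ := Submodule.mem_span_singleton.1 (hker ▸ hμker)
  exact hμ ⟨a, by rw [Algebra.algebraMap_eq_smul_one, ha]⟩

theorem fieldReductionPreimage_subset_ker (hKL : finrank K L = 2) {t : Dual K L} (ht : t ≠ 0)
    {μ : L} (hμ : μ ∉ Set.range (algebraMap K L)) (ℓ : Dual L V) :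
    fieldReductionPreimage L {Q : ℙ K V | t (ℓ Q.rep) = 0 ∧ t ((μ • ℓ) Q.rep) = 0} ⊆
      {P | P.submodule ≤ LinearMap.ker ℓ} := by
  intro P hP
  obtain ⟨Q, ⟨h₁, h₂⟩, hPQ⟩ := exists_eq_span_rep_of_mem_fieldReductionPreimage hP
  rw [Set.mem_ofPred_eq, hPQ, Submodule.span_singleton_le_iff_mem, LinearMap.mem_ker]
  exact eq_zero_of_apply_eq_zero_of_apply_mul_eq_zero hKL ht hμ h₁ h₂

theorem exists_apply_eq_zero_apply_eq_one {ℓ₁ ℓ₂ : Dual L V} (h : ∀ μ : L, ℓ₂ ≠ μ • ℓ₁) :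
    ∃ u, ℓ₁ u = 0 ∧ ℓ₂ u = 1 := by
  have hker : ¬ LinearMap.ker ℓ₁ ≤ LinearMap.ker ℓ₂ := fun hle => by
    have := mem_span_of_iInf_ker_le_ker (L := fun _ : Unit => ℓ₁) (K := ℓ₂) (by simpa using hle)
    rw [Set.range_const, Submodule.mem_span_singleton] at this
    obtain ⟨μ, hμ⟩ := this
    exact h μ hμ.symm
  obtain ⟨u, hu₁, hu₂⟩ := SetLike.not_le_iff_exists.1 hker
  rw [LinearMap.mem_ker] at hu₁ hu₂
  exact ⟨(ℓ₂ u)⁻¹ • u, by simp [hu₁], by simp [hu₂]⟩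

theorem finrank_ker_inf_ker_add_two [FiniteDimensional L V] {ℓ₁ ℓ₂ : Dual L V} {u w : V}
    (hu₁ : ℓ₁ u = 0) (hu₂ : ℓ₂ u = 1) (hw₁ : ℓ₁ w = 1) (hw₂ : ℓ₂ w = 0) :
    finrank L ↥(LinearMap.ker ℓ₁ ⊓ LinearMap.ker ℓ₂) + 2 = finrank L V := by
  have hsurj : Function.Surjective (ℓ₁.prod ℓ₂) := fun p =>
    ⟨p.1 • w + p.2 • u, by simp [hu₁, hu₂, hw₁, hw₂]⟩
  have := (ℓ₁.prod ℓ₂).finrank_range_add_finrank_ker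
  rw [LinearMap.range_eq_top.2 hsurj, finrank_top, LinearMap.ker_prod, Module.finrank_prod,
    finrank_self] at this
  omega

theorem exists_isDegHermitian_superset (hKL : finrank K L = 2) (hV : finrank L V = 3)
    {t : Dual K L} (ht : t ≠ 0) {ℓ₁ ℓ₂ : Dual L V} (hℓ₁ : ℓ₁ ≠ 0) (hℓ : ∀ μ : L, ℓ₂ ≠ μ • ℓ₁) :
    ∃ H, IsDegHermitian K H ∧
      fieldReductionPreimage L {Q : ℙ K V | t (ℓ₁ Q.rep) = 0 ∧ t (ℓ₂ Q.rep) = 0} ⊆ H := by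
  have := Module.finite_of_finrank_eq_succ hKL
  have := Module.finite_of_finrank_eq_succ hV
  obtain ⟨u, hu₁, hu₂⟩ := exists_apply_eq_zero_apply_eq_one hℓ
  obtain ⟨w, hw₂, hw₁⟩ := exists_apply_eq_zero_apply_eq_one (ℓ₁ := ℓ₂) (ℓ₂ := ℓ₁) fun μ h => by
    have hμ : μ ≠ 0 := by rintro rfl; exact hℓ₁ (by simpa using h)
    exact hℓ μ⁻¹ (by rw [h, smul_smul, inv_mul_cancel₀ hμ, one_smul])
  have hP₀ : finrank L ↥(LinearMap.ker ℓ₁ ⊓ LinearMap.ker ℓ₂) = 1 := by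
    have := finrank_ker_inf_ker_add_two hu₁ hu₂ hw₁ hw₂
    omega
  -- the Baer subline comes from `ker t` being a `K`-line
  obtain ⟨τ, hτ⟩ : ∃ τ : L, LinearMap.ker t = K ∙ τ := by
    have hrank : finrank K (LinearMap.ker t) = 1 := by
      have := t.finrank_ker_add_one_of_ne_zero ht
      omega
    obtain ⟨τ, hτ, hτ0⟩ := Submodule.exists_mem_ne_zero_of_ne_bot
      (Submodule.one_le_finrank_iff.1 hrank.ge)
    exact ⟨τ, eq_span_singleton_of_mem_of_finrank_eq_one hrank hτ hτ0⟩
  refine ⟨_, ⟨mk'' _ hP₀, u, w, ?_, ?_, rfl⟩, ?_⟩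
  · refine LinearIndependent.pair_iff.2 fun s r h => ⟨?_, ?_⟩
    · simpa [hu₂, hw₂] using congrArg ℓ₂ h
    · simpa [hu₁, hw₁] using congrArg ℓ₁ h
  · rw [submodule_mk'', eq_bot_iff]
    rintro z ⟨⟨hz₁, hz₂⟩, hz⟩
    obtain ⟨α, β, rfl⟩ := Submodule.mem_span_pair.1 hz
    simp_all
  · intro P hP
    obtain ⟨Q, ⟨h₁, h₂⟩, hPQ⟩ := exists_eq_span_rep_of_mem_fieldReductionPreimage hP
    obtain ⟨a, ha⟩ := Submodule.mem_span_singleton.1 (hτ ▸ h₁ : ℓ₁ Q.rep ∈ K ∙ τ)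
    obtain ⟨b, hb⟩ := Submodule.mem_span_singleton.1 (hτ ▸ h₂ : ℓ₂ Q.rep ∈ K ∙ τ)
    set x := algebraMap K L b • u + algebraMap K L a • w
    have hQ : Q.rep - τ • x ∈ LinearMap.ker ℓ₁ ⊓ LinearMap.ker ℓ₂ := by
      constructor <;> simp [x, ← ha, ← hb, hu₁, hu₂, hw₁, hw₂, Algebra.smul_def, mul_comm]
    by_cases hab : b = 0 ∧ a = 0
    · refine ⟨1, 0, by simp, ?_⟩
      rw [hPQ, submodule_mk'', Submodule.span_singleton_le_iff_mem]
      exact Submodule.mem_sup_left (by simpa [x, hab] using hQ)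
    · refine ⟨b, a, hab, ?_⟩
      rw [hPQ, submodule_mk'', Submodule.span_singleton_le_iff_mem,
        ← sub_add_cancel Q.rep (τ • x)]
      exact add_mem (Submodule.mem_sup_left hQ)
        (Submodule.mem_sup_right (Submodule.smul_mem _ τ (Submodule.mem_span_singleton_self x)))

theorem fieldReductionPreimage_subset_line_or_isDegHermitian (hKL : finrank K L = 2)
    (hV : finrank L V = 3) {f g : Dual K V} (hf : f ≠ 0)
    (hfg : ¬ LinearMap.ker f ≤ LinearMap.ker g) :
    (∃ W : Submodule L V, finrank L W = 2 ∧
      fieldReductionPreimage L {Q : ℙ K V | f Q.rep = 0 ∧ g Q.rep = 0} ⊆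
        {P | P.submodule ≤ W}) ∨
    ∃ H, IsDegHermitian K H ∧
      fieldReductionPreimage L {Q : ℙ K V | f Q.rep = 0 ∧ g Q.rep = 0} ⊆ H := by
  have := Module.finite_of_finrank_eq_succ hKL
  have := Module.finite_of_finrank_eq_succ hV
  obtain ⟨t, ht⟩ := exists_ne (0 : Dual K L)
  obtain ⟨ℓ₁, rfl⟩ := exists_dual_comp_eq ht f
  obtain ⟨ℓ₂, rfl⟩ := exists_dual_comp_eq ht g
  have hℓ₁ : ℓ₁ ≠ 0 := by rintro rfl; exact hf (by simp)
  by_cases hdep : ∃ μ : L, ℓ₂ = μ • ℓ₁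
  · obtain ⟨μ, rfl⟩ := hdep
    have hμ : μ ∉ Set.range (algebraMap K L) := by
      rintro ⟨c, rfl⟩
      exact hfg fun v hv => by simp_all [algebraMap_smul]
    left
    refine ⟨LinearMap.ker ℓ₁, ?_, fieldReductionPreimage_subset_ker hKL ht hμ ℓ₁⟩
    have := ℓ₁.finrank_ker_add_one_of_ne_zero hℓ₁
    omega
  · exact .inr (exists_isDegHermitian_superset hKL hV ht hℓ₁ (not_exists.1 hdep))

end FieldReduction

/-- If a set `S` of points of `PG(2, q²)` is contained in no line and in no degenerate
Hermitian curve of rank 2, then the corresponding spread lines of `PG(5, q)` obtained by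
field reduction are in higgledy–piggledy arrangement: the union of their points is a
cutting blocking set of `PG(5, q)`. -/
theorem statement14 (q : ℕ) (K L : Type*) [Field K] [Field L] [Algebra K L]
    [Fintype K] [Fintype L] (hK : Fintype.card K = q) (hL : Fintype.card L = q ^ 2)
    (S : Set (ℙ L (Fin 3 → L)))
    (hline : ¬ ∃ W : Submodule L (Fin 3 → L), Module.finrank L W = 2 ∧
      S ⊆ {P : ℙ L (Fin 3 → L) | P.submodule ≤ W})
    (hherm : ∀ H : Set (ℙ L (Fin 3 → L)), IsDegHermitian K H → ¬ S ⊆ H) :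
    IsCuttingBlockingSet (⋃ P ∈ S, fieldReduction (K := K) P) := by
  have hKL : finrank K L = 2 := by
    have h := Module.card_eq_pow_finrank (K := K) (V := L)
    rw [hK, hL] at h
    exact Nat.pow_right_injective (hK ▸ Fintype.one_lt_card) h.symm
  refine isCuttingBlockingSet_of_forall_ker_le fun f g hf hg => ?_
  by_contra hfg
  have hS : S ⊆ fieldReductionPreimage L {Q : ℙ K (Fin 3 → L) | f Q.rep = 0 ∧ g Q.rep = 0} := by
    intro P hP
    obtain ⟨Q, hQP, hfQ⟩ := exists_mem_fieldReduction_apply_eq_zero hKL f P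
    exact ⟨Q, hQP, hfQ, hg Q (Set.mem_biUnion hP hQP) hfQ⟩
  rcases fieldReductionPreimage_subset_line_or_isDegHermitian hKL (by simp) hf hfg with
    ⟨W, hW, hSW⟩ | ⟨H, hH, hSH⟩
  · exact hline ⟨W, hW, hS.trans hSW⟩
  · exact hherm H hH (hS.trans hSH)
end
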